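/- arXiv:2411.07582 — 4 statements merged into one kernel-verified Lean document; each statement's English description precedes it below -/
import Mathlib

section
/- Let F be a free commutative monoid and let → be a binary relation on F∖{0} that is the reflexive–transitive closure of a family of elementary moves, where each elementary move replaces a single generator occurring in an element by a fixed nonzero element of F (depending on the generator and the move type). If α, β, α₁, α₂ ∈ F∖{0} satisfy α = α₁ + α₂ and α → β, then there exist β₁, β₂ ∈ F∖{0} with β = β₁ + β₂, α₁ → β₁, and α₂ → β₂. -/
/-! A move rewrites a single generator, and a generator of `α₁ + α₂` is a generator of `α₁` or of
`α₂`; so each move out of a sum is a move out of one summand, with the other summand carried along.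
Following a chain of moves step by step thus splits it into two chains, and nonzeroness is
preserved because every expansion is nonzero. -/

namespace Relation.ReflTransGen

theorem exists_split_of_add {M : Type*} [Add M] {r : M → M → Prop}
    (hsplit : ∀ a₁ a₂ c, r (a₁ + a₂) c →
      (∃ c₁, r a₁ c₁ ∧ c = c₁ + a₂) ∨ (∃ c₂, r a₂ c₂ ∧ c = a₁ + c₂))
    {a₁ a₂ b : M} (h : ReflTransGen r (a₁ + a₂) b) :
    ∃ b₁ b₂, b = b₁ + b₂ ∧ ReflTransGen r a₁ b₁ ∧ ReflTransGen r a₂ b₂ := by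
  induction h with
  | refl => exact ⟨a₁, a₂, rfl, .refl, .refl⟩
  | tail _ hbc ih =>
    obtain ⟨b₁, b₂, rfl, hb₁, hb₂⟩ := ih
    rcases hsplit b₁ b₂ _ hbc with ⟨c₁, hc₁, rfl⟩ | ⟨c₂, hc₂, rfl⟩
    · exact ⟨c₁, b₂, rfl, hb₁.tail hc₁, hb₂⟩
    · exact ⟨b₁, c₂, rfl, hb₁, hb₂.tail hc₂⟩

theorem ne_zero {M : Type*} [Zero M] {r : M → M → Prop} (hr : ∀ a b, r a b → b ≠ 0)
    {a b : M} (h : ReflTransGen r a b) (ha : a ≠ 0) : b ≠ 0 := by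
  rcases (cases_tail_iff r a b).1 h with rfl | ⟨c, _, hcb⟩
  · exact ha
  · exact hr c b hcb

end Relation.ReflTransGen

namespace Finsupp

theorem single_one_le_add {X : Type*} {x : X} {a b : X →₀ ℕ}
    (h : single x 1 ≤ a + b) : single x 1 ≤ a ∨ single x 1 ≤ b := by
  simp only [single_le_iff, coe_add, Pi.add_apply] at h ⊢
  omega

end Finsupp

section ElementaryMove

variable {X I : Type} (adm : I → X → Prop) (si : I → X → (X →₀ ℕ))

def IsElementaryMove (a b : X →₀ ℕ) : Prop :=
  ∃ (i : I) (x : X) (γ : X →₀ ℕ), adm i x ∧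
    a = γ + Finsupp.single x 1 ∧ b = γ + si i x

variable {adm si}

theorem IsElementaryMove.ne_zero (hnz : ∀ i x, adm i x → si i x ≠ 0) {a b : X →₀ ℕ}
    (h : IsElementaryMove adm si a b) : b ≠ 0 := by
  obtain ⟨i, x, γ, hadm, -, rfl⟩ := h
  exact fun h0 => hnz i x hadm (add_eq_zero.1 h0).2

theorem IsElementaryMove.exists_of_single_le_left {a₁ a₂ c : X →₀ ℕ} {i : I} {x : X}
    {γ : X →₀ ℕ} (hadm : adm i x) (hγ : γ + Finsupp.single x 1 = a₁ + a₂)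
    (hc : c = γ + si i x) (hx : Finsupp.single x 1 ≤ a₁) :
    ∃ c₁, IsElementaryMove adm si a₁ c₁ ∧ c = c₁ + a₂ := by
  obtain ⟨δ, rfl⟩ := exists_add_of_le hx
  have hγδ : γ = δ + a₂ := add_right_cancel (b := Finsupp.single x 1) (by rw [hγ]; abel)
  exact ⟨δ + si i x, ⟨i, x, δ, hadm, add_comm _ _, rfl⟩, by rw [hc, hγδ]; abel⟩

theorem IsElementaryMove.split_of_add {a₁ a₂ c : X →₀ ℕ}
    (h : IsElementaryMove adm si (a₁ + a₂) c) :
    (∃ c₁, IsElementaryMove adm si a₁ c₁ ∧ c = c₁ + a₂) ∨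
      (∃ c₂, IsElementaryMove adm si a₂ c₂ ∧ c = a₁ + c₂) := by
  obtain ⟨i, x, γ, hadm, hγ, hc⟩ := h
  have hx : Finsupp.single x 1 ≤ a₁ + a₂ := hγ ▸ le_add_self
  rcases Finsupp.single_one_le_add hx with hx₁ | hx₂
  · exact .inl (exists_of_single_le_left hadm hγ.symm hc hx₁)
  · obtain ⟨c₂, hm, rfl⟩ := exists_of_single_le_left hadm (hγ.symm.trans (add_comm _ _)) hc hx₂
    exact .inr ⟨c₂, hm, add_comm _ _⟩

end ElementaryMove

/-- **Splitting lemma for free commutative monoids.**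
Let `F = ℕ^(X)` be the free commutative monoid on `X`, and let `step` be the
family of elementary moves: `step a b` iff `a = γ + x` for some generator `x`
admissible for a move type `i`, and `b = γ + si i x` where `si i x ≠ 0`.
If `α = α₁ + α₂` with `α₁, α₂ ≠ 0` and `α → β` (reflexive–transitive closure),
then `β = β₁ + β₂` with `α₁ → β₁`, `α₂ → β₂` and `β₁, β₂ ≠ 0`. -/
theorem stmt0 {X I : Type} (adm : I → X → Prop) (si : I → X → (X →₀ ℕ))
    (hnz : ∀ i x, adm i x → si i x ≠ 0)
    (step : (X →₀ ℕ) → (X →₀ ℕ) → Prop)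
    (hstep : ∀ a b, step a b ↔
      ∃ (i : I) (x : X) (γ : X →₀ ℕ), adm i x ∧
        a = γ + Finsupp.single x 1 ∧ b = γ + si i x)
    (α β α₁ α₂ : X →₀ ℕ) (hα : α = α₁ + α₂) (h1 : α₁ ≠ 0) (h2 : α₂ ≠ 0)
    (h : Relation.ReflTransGen step α β) :
    ∃ β₁ β₂ : X →₀ ℕ, β₁ ≠ 0 ∧ β₂ ≠ 0 ∧ β = β₁ + β₂ ∧
      Relation.ReflTransGen step α₁ β₁ ∧ Relation.ReflTransGen step α₂ β₂ := by
  obtain rfl : step = IsElementaryMove adm si := by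
    ext a b
    exact hstep a b
  subst hα
  obtain ⟨β₁, β₂, rfl, hβ₁, hβ₂⟩ :=
    h.exists_split_of_add fun _ _ _ hm => hm.split_of_add
  have hmove : ∀ a b, IsElementaryMove adm si a b → b ≠ 0 := fun _ _ hm => hm.ne_zero hnz
  exact ⟨β₁, β₂, hβ₁.ne_zero hmove h1, hβ₂.ne_zero hmove h2, rfl, hβ₁, hβ₂⟩
end

section
/- Let Λ be a row-finite k-graph with no sources. For any vertex u and any n ∈ ℕ^k, in the free commutative monoid on Λ⁰ with the transition relation → generated by u →ᵢ Σ_{α ∈ uΛ^{e_i}} s(α), one has u → Σ_{λ ∈ uΛ^n} s(λ). Consequently, for any m, n ∈ ℕ^k, Σ_{λ ∈ uΛ^n} s(λ) and Σ_{μ ∈ uΛ^m} s(μ) are congruent modulo the congruence generated by →. -/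
/-! Unique factorization identifies `uΛ^(m+n)` with the pairs `(μ, ν)` where `μ ∈ uΛ^m` and
`ν ∈ s(μ)Λ^n`, so `Σ_{uΛ^(m+n)} s = Σ_{μ ∈ uΛ^m} Σ_{s(μ)Λ^n} s`. Hence, if `u → Σ_{uΛ^m} s` and
every vertex `v` satisfies `v → Σ_{vΛ^n} s`, then moving summand by summand gives
`u → Σ_{uΛ^(m+n)} s`. As `uΛ^0 = {u}` and the degree-`eᵢ` sums are single moves, induction on `n`
written as a sum of `eᵢ` gives `u → Σ_{uΛ^n} s` for all `n`; both sums in the congruence are then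
congruent to `u`. -/

/-- A (small) `k`-graph: a small category `Λ` with vertex set `V`, path set `P`,
range and source maps `r, s`, a degree functor `d : Λ → ℕᵏ` satisfying the
unique factorization property. -/
structure KGraph (k : ℕ) where
  V : Type
  P : Type
  r : P → V
  s : P → V
  d : P → Fin k → ℕ
  ident : V → P
  comp : (p q : P) → s p = r q → P
  r_ident : ∀ v, r (ident v) = v
  s_ident : ∀ v, s (ident v) = v
  d_ident : ∀ v, d (ident v) = 0
  r_comp : ∀ p q h, r (comp p q h) = r p
  s_comp : ∀ p q h, s (comp p q h) = s q
  d_comp : ∀ p q h, d (comp p q h) = d p + d q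
  ident_comp : ∀ (p : P) (h : s (ident (r p)) = r p), comp (ident (r p)) p h = p
  comp_ident : ∀ (p : P) (h : s p = r (ident (s p))), comp p (ident (s p)) h = p
  comp_assoc : ∀ (p q t : P) (h1 : s p = r q) (h2 : s q = r t)
      (h3 : s (comp p q h1) = r t) (h4 : s p = r (comp q t h2)),
      comp (comp p q h1) t h3 = comp p (comp q t h2) h4
  factor : ∀ (p : P) (m n : Fin k → ℕ), d p = m + n →
      ∃! qt : P × P, ∃ h : s qt.1 = r qt.2,
        comp qt.1 qt.2 h = p ∧ d qt.1 = m ∧ d qt.2 = n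

namespace KGraph

variable {k : ℕ}

/-- `vΛⁿ`, the set of paths with range `v` and degree `n`. -/
def pathsSet (Λ : KGraph k) (v : Λ.V) (n : Fin k → ℕ) : Set Λ.P :=
  {p | Λ.r p = v ∧ Λ.d p = n}

/-- `Λ` is row-finite if every `vΛⁿ` is finite. -/
def RowFinite (Λ : KGraph k) : Prop := ∀ v n, (Λ.pathsSet v n).Finite

/-- `Λ` has no sources if every `vΛⁿ` is nonempty. -/
def NoSources (Λ : KGraph k) : Prop := ∀ v n, (Λ.pathsSet v n).Nonempty

/-- The element `Σ_{λ ∈ vΛⁿ} s(λ)` of the free commutative monoid `ℕ^(Λ⁰)`. -/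
noncomputable def vSum (Λ : KGraph k) (hfin : Λ.RowFinite) (v : Λ.V) (n : Fin k → ℕ) :
    Λ.V →₀ ℕ :=
  ∑ p ∈ (hfin v n).toFinset, Finsupp.single (Λ.s p) 1

end KGraph

namespace KGraph

/-- One-step generating relation `u ∼ Σ_{λ ∈ uΛ^{e_i}} s(λ)` (on single generators). -/
noncomputable def OneStepRel (Λ : KGraph k) (hfin : Λ.RowFinite) :
    (Λ.V →₀ ℕ) → (Λ.V →₀ ℕ) → Prop :=
  fun a b => ∃ (u : Λ.V) (i : Fin k),
    a = Finsupp.single u 1 ∧ b = Λ.vSum hfin u (Pi.single i 1)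

/-- Generating relation `u ∼ Σ_{λ ∈ uΛⁿ} s(λ)` for all degrees `n`. -/
noncomputable def AllRel (Λ : KGraph k) (hfin : Λ.RowFinite) :
    (Λ.V →₀ ℕ) → (Λ.V →₀ ℕ) → Prop :=
  fun a b => ∃ (u : Λ.V) (n : Fin k → ℕ),
    a = Finsupp.single u 1 ∧ b = Λ.vSum hfin u n

/-- The elementary move `→ᵢ`: replace one occurrence of a generator `u`
by `Σ_{λ ∈ uΛ^{e_i}} s(λ)`. -/
noncomputable def MoveStep (Λ : KGraph k) (hfin : Λ.RowFinite) :
    (Λ.V →₀ ℕ) → (Λ.V →₀ ℕ) → Prop :=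
  fun a b => ∃ (u : Λ.V) (i : Fin k) (γ : Λ.V →₀ ℕ),
    a = γ + Finsupp.single u 1 ∧ b = γ + Λ.vSum hfin u (Pi.single i 1)

/-- The relation `→`: the reflexive–transitive closure of the elementary moves. -/
noncomputable def Move (Λ : KGraph k) (hfin : Λ.RowFinite) :
    (Λ.V →₀ ℕ) → (Λ.V →₀ ℕ) → Prop :=
  Relation.ReflTransGen (MoveStep Λ hfin)

end KGraph

namespace KGraph

variable {k : ℕ} {Λ : KGraph k}

theorem exists_comp_eq_of_d_eq_add {p : Λ.P} {m n : Fin k → ℕ} (h : Λ.d p = m + n) :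
    ∃ a b, ∃ hab : Λ.s a = Λ.r b, Λ.comp a b hab = p ∧ Λ.d a = m ∧ Λ.d b = n := by
  obtain ⟨⟨a, b⟩, ⟨hab, hp, ha, hb⟩, -⟩ := Λ.factor p m n h
  exact ⟨a, b, hab, hp, ha, hb⟩

theorem comp_inj {a b a' b' : Λ.P} {hab : Λ.s a = Λ.r b} {hab' : Λ.s a' = Λ.r b'}
    (h : Λ.comp a b hab = Λ.comp a' b' hab') (ha : Λ.d a = Λ.d a') (hb : Λ.d b = Λ.d b') :
    a = a' ∧ b = b' :=
  Prod.mk.inj <| (Λ.factor _ _ _ (Λ.d_comp a b hab)).unique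
    ⟨hab, rfl, rfl, rfl⟩ ⟨hab', h.symm, ha.symm, hb.symm⟩

theorem eq_ident_of_d_eq_zero {p : Λ.P} (hp : Λ.d p = 0) : p = Λ.ident (Λ.r p) :=
  (comp_inj ((Λ.comp_ident p (Λ.r_ident _).symm).trans (Λ.ident_comp p (Λ.s_ident _)).symm)
    (by rw [hp, d_ident]) (by rw [hp, d_ident])).1

theorem pathsSet_zero (v : Λ.V) : Λ.pathsSet v 0 = {Λ.ident v} := by
  ext p
  constructor
  · rintro ⟨rfl, hp⟩
    exact eq_ident_of_d_eq_zero hp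
  · rintro rfl
    exact ⟨Λ.r_ident v, Λ.d_ident v⟩

theorem vSum_zero (hfin : Λ.RowFinite) (v : Λ.V) :
    Λ.vSum hfin v 0 = Finsupp.single v 1 := by
  simp [vSum, pathsSet_zero, Λ.s_ident]

theorem vSum_add (hfin : Λ.RowFinite) (u : Λ.V) (m n : Fin k → ℕ) :
    Λ.vSum hfin u (m + n) = ∑ p ∈ (hfin u m).toFinset, Λ.vSum hfin (Λ.s p) n := by
  simp only [vSum]
  rw [← Finset.sum_sigma _ (fun p => (hfin (Λ.s p) n).toFinset)
    (fun x => Finsupp.single (Λ.s x.2) 1)]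
  symm
  refine Finset.sum_bij (fun x hx => Λ.comp x.1 x.2 ?_) ?_ ?_ ?_ ?_
  · simp only [Finset.mem_sigma, Set.Finite.mem_toFinset] at hx
    exact hx.2.1.symm
  · simp only [Finset.mem_sigma, Set.Finite.mem_toFinset]
    rintro ⟨a, b⟩ ⟨⟨rfl, ha⟩, hab, hb⟩
    exact ⟨Λ.r_comp _ _ _, by rw [Λ.d_comp, ha, hb]⟩
  · rintro ⟨a, b⟩ hx ⟨a', b'⟩ hx' h
    simp only [Finset.mem_sigma, Set.Finite.mem_toFinset] at hx hx'
    obtain ⟨rfl, rfl⟩ := comp_inj h (hx.1.2.trans hx'.1.2.symm) (hx.2.2.trans hx'.2.2.symm)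
    rfl
  · simp only [Finset.mem_sigma, Set.Finite.mem_toFinset]
    rintro p ⟨rfl, hp⟩
    obtain ⟨a, b, hab, rfl, ha, hb⟩ := exists_comp_eq_of_d_eq_add hp
    exact ⟨⟨a, b⟩, ⟨⟨(Λ.r_comp _ _ _).symm, ha⟩, hab.symm, hb⟩, rfl⟩
  · intro x _
    rw [Λ.s_comp]

namespace Move

variable {hfin : Λ.RowFinite} {a b c d : Λ.V →₀ ℕ}

theorem add_left (c : Λ.V →₀ ℕ) (h : Move Λ hfin a b) : Move Λ hfin (c + a) (c + b) :=
  h.lift (c + ·) fun _ _ ⟨u, i, γ, ha, hb⟩ =>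
    ⟨u, i, c + γ, by rw [ha, add_assoc], by rw [hb, add_assoc]⟩

theorem add (hab : Move Λ hfin a b) (hcd : Move Λ hfin c d) :
    Move Λ hfin (a + c) (b + d) :=
  (hcd.add_left a).trans (by rw [add_comm a, add_comm b]; exact hab.add_left d)

theorem sum {ι : Type*} (s : Finset ι) {f g : ι → Λ.V →₀ ℕ}
    (h : ∀ i ∈ s, Move Λ hfin (f i) (g i)) : Move Λ hfin (∑ i ∈ s, f i) (∑ i ∈ s, g i) := by
  induction s using Finset.cons_induction with
  | empty => exact .refl
  | cons i s _ ih =>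
    rw [Finset.sum_cons, Finset.sum_cons]
    exact (h i (Finset.mem_cons_self i s)).add (ih fun j hj => h j (Finset.mem_cons_of_mem hj))

end Move

theorem move_le_addConGen (hfin : Λ.RowFinite) : Move Λ hfin ≤ addConGen (MoveStep Λ hfin) :=
  Relation.reflTransGen_le_of_equivalence_of_le (addConGen _).iseqv AddConGen.Rel.of

theorem moveStep_single_vSum (hfin : Λ.RowFinite) (u : Λ.V) (i : Fin k) :
    MoveStep Λ hfin (Finsupp.single u 1) (Λ.vSum hfin u (Pi.single i 1)) :=
  ⟨u, i, 0, (zero_add _).symm, (zero_add _).symm⟩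

theorem move_single_vSum_add {hfin : Λ.RowFinite} {u : Λ.V} {m n : Fin k → ℕ}
    (hm : Move Λ hfin (Finsupp.single u 1) (Λ.vSum hfin u m))
    (hn : ∀ v, Move Λ hfin (Finsupp.single v 1) (Λ.vSum hfin v n)) :
    Move Λ hfin (Finsupp.single u 1) (Λ.vSum hfin u (m + n)) := by
  rw [vSum_add]
  exact hm.trans (Move.sum _ fun p _ => hn (Λ.s p))

theorem move_single_vSum (hfin : Λ.RowFinite) (u : Λ.V) (n : Fin k → ℕ) :
    Move Λ hfin (Finsupp.single u 1) (Λ.vSum hfin u n) := by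
  induction n using Pi.single_induction generalizing u with
  | zero => rw [vSum_zero]; exact .refl
  | add m n hm hn => exact move_single_vSum_add (hm u) hn
  | single i j =>
    induction j generalizing u with
    | zero => rw [Pi.single_zero, vSum_zero]; exact .refl
    | succ j ih =>
      rw [Pi.single_add]
      exact move_single_vSum_add (ih u) fun v => .single (moveStep_single_vSum hfin v i)

end KGraph

open KGraph in
theorem stmt2_general {k : ℕ} (Λ : KGraph k) (hfin : Λ.RowFinite)
    (u : Λ.V) (n : Fin k → ℕ) :
    Move Λ hfin (Finsupp.single u 1) (Λ.vSum hfin u n) ∧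
    ∀ m : Fin k → ℕ,
      (addConGen (MoveStep Λ hfin)) (Λ.vSum hfin u n) (Λ.vSum hfin u m) := by
  have hcon (m : Fin k → ℕ) :
      addConGen (MoveStep Λ hfin) (Finsupp.single u 1) (Λ.vSum hfin u m) :=
    move_le_addConGen hfin _ _ (move_single_vSum hfin u m)
  exact ⟨move_single_vSum hfin u n, fun m => ((addConGen _).symm (hcon n)).trans (hcon m)⟩

open KGraph in
/-- Let `Λ` be a row-finite `k`-graph with no sources. Then in the free commutative
monoid on `Λ⁰`, `u → Σ_{λ ∈ uΛⁿ} s(λ)`, and consequently for all `m, n`,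
`Σ_{λ ∈ uΛⁿ} s(λ)` and `Σ_{μ ∈ uΛᵐ} s(μ)` are congruent modulo the congruence
generated by `→`. -/
theorem stmt2 {k : ℕ} (Λ : KGraph k) (hfin : Λ.RowFinite) (hns : Λ.NoSources)
    (u : Λ.V) (n : Fin k → ℕ) :
    Move Λ hfin (Finsupp.single u 1) (Λ.vSum hfin u n) ∧
    ∀ m : Fin k → ℕ,
      (addConGen (MoveStep Λ hfin)) (Λ.vSum hfin u n) (Λ.vSum hfin u m) :=
  stmt2_general Λ hfin u n
end

section
/- Let Λ be a row-finite k-graph with no sources. Every ℤ^k-order ideal J of the talented monoid T_Λ is generated (as a ℤ^k-order ideal) by the set {v(0) : v ∈ Λ⁰, v(0) ∈ J}. -/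
namespace KGraph

/-- The free commutative monoid on `Λ⁰ × ℤᵏ`. -/
abbrev TalF (Λ : KGraph k) : Type := (Λ.V × (Fin k → ℤ)) →₀ ℕ

/-- The defining relations of the talented monoid:
`v(n) = Σ_{α ∈ vΛ^{e_i}} s(α)(n + e_i)`. -/
noncomputable def TalRel (Λ : KGraph k) (hfin : Λ.RowFinite) : TalF Λ → TalF Λ → Prop :=
  fun a b => ∃ (v : Λ.V) (n : Fin k → ℤ) (i : Fin k),
    a = Finsupp.single (v, n) 1 ∧
    b = ∑ p ∈ (hfin v (Pi.single i 1)).toFinset,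
          Finsupp.single (Λ.s p, n + Pi.single i 1) 1

/-- The congruence generated by the defining relations of the talented monoid. -/
noncomputable def TalCon (Λ : KGraph k) (hfin : Λ.RowFinite) : AddCon (TalF Λ) :=
  addConGen (TalRel Λ hfin)

/-- The talented monoid `T_Λ`. -/
abbrev Tal (Λ : KGraph k) (hfin : Λ.RowFinite) : Type := (TalCon Λ hfin).Quotient

/-- The quotient map `ℕ^(Λ⁰ × ℤᵏ) → T_Λ`. -/
noncomputable def tmk (Λ : KGraph k) (hfin : Λ.RowFinite) : TalF Λ → Tal Λ hfin :=
  (TalCon Λ hfin).mk'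

/-- Shift of states on the free commutative monoid; it induces the `ℤᵏ`-action on `T_Λ`. -/
noncomputable def shiftF (Λ : KGraph k) (p : Fin k → ℤ) : TalF Λ → TalF Λ :=
  Finsupp.mapDomain (fun q => (q.1, q.2 + p))

/-- A `ℤᵏ`-order ideal of `T_Λ`: a submonoid, downward closed in the algebraic
preorder, and closed under the `ℤᵏ`-action (expressed on representatives). -/
noncomputable def IsOrderIdeal (Λ : KGraph k) (hfin : Λ.RowFinite)
    (J : Set (Tal Λ hfin)) : Prop :=
  (0 : Tal Λ hfin) ∈ J ∧
  (∀ a b, a ∈ J → b ∈ J → a + b ∈ J) ∧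
  (∀ a b : Tal Λ hfin, a + b ∈ J → a ∈ J) ∧
  (∀ (p : Fin k → ℤ) (a : TalF Λ), tmk Λ hfin a ∈ J → tmk Λ hfin (shiftF Λ p a) ∈ J)

/-- `H ⊆ Λ⁰` is hereditary. -/
def Hereditary (Λ : KGraph k) (H : Set Λ.V) : Prop :=
  ∀ p : Λ.P, Λ.r p ∈ H → Λ.s p ∈ H

/-- `H ⊆ Λ⁰` is saturated. -/
def Saturated (Λ : KGraph k) (H : Set Λ.V) : Prop :=
  ∀ (v : Λ.V) (n : Fin k → ℕ),
    (∀ p : Λ.P, Λ.r p = v → Λ.d p = n → Λ.s p ∈ H) → v ∈ H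

/-- The `ℤᵏ`-order ideal of `T_Λ` generated by a set `X ⊆ Λ⁰` of vertices:
all `x` with `x ≤ Σᵢ ⁿⁱvᵢ` for finitely many `vᵢ ∈ X`, `nᵢ ∈ ℤᵏ`. -/
noncomputable def genIdeal (Λ : KGraph k) (hfin : Λ.RowFinite) (X : Set Λ.V) :
    Set (Tal Λ hfin) :=
  {x | ∃ b : TalF Λ, (∀ q ∈ b.support, q.1 ∈ X) ∧ ∃ z, x + z = tmk Λ hfin b}

end KGraph

/-! The shift by `∓n` shows that `v(n) ∈ J` iff `v(0) ∈ J`. As `J` is a downward closed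
submonoid, the class of `a ∈ ℕ^(Λ⁰ × ℤᵏ)` lies in `J` iff every `v(n)` occurring in `a` does, i.e.
iff `a` is a sum of shifts of vertices `v` with `v(0) ∈ J`. So every element of `J` is a generator
of the right-hand side, and everything below such a generator lies in `J`. -/

namespace KGraph

variable {k : ℕ} {Λ : KGraph k} {hfin : Λ.RowFinite}

lemma tmk_eq_mk' : tmk Λ hfin = ⇑(TalCon Λ hfin).mk' := rfl

lemma tmk_add (a b : TalF Λ) : tmk Λ hfin (a + b) = tmk Λ hfin a + tmk Λ hfin b :=
  map_add _ a b

lemma tmk_surjective : Function.Surjective (tmk Λ hfin) :=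
  AddCon.mk'_surjective

lemma shiftF_single (p : Fin k → ℤ) (q : Λ.V × (Fin k → ℤ)) (m : ℕ) :
    shiftF Λ p (Finsupp.single q m) = Finsupp.single (q.1, q.2 + p) m :=
  Finsupp.mapDomain_single

namespace IsOrderIdeal

variable {J : Set (Tal Λ hfin)} (hJ : IsOrderIdeal Λ hfin J)
include hJ

def toAddSubmonoid : AddSubmonoid (Tal Λ hfin) where
  carrier := J
  zero_mem' := hJ.1
  add_mem' := hJ.2.1 _ _

lemma mem_of_add_mem_left {x y : Tal Λ hfin} (h : x + y ∈ J) : x ∈ J :=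
  hJ.2.2.1 x y h

lemma tmk_shiftF_mem (p : Fin k → ℤ) {a : TalF Λ} (h : tmk Λ hfin a ∈ J) :
    tmk Λ hfin (shiftF Λ p a) ∈ J :=
  hJ.2.2.2 p a h

lemma tmk_single_mem_iff (v : Λ.V) (n : Fin k → ℤ) :
    tmk Λ hfin (Finsupp.single (v, n) 1) ∈ J ↔ tmk Λ hfin (Finsupp.single (v, 0) 1) ∈ J :=
  ⟨fun h => by simpa [shiftF_single] using hJ.tmk_shiftF_mem (-n) h,
    fun h => by simpa [shiftF_single] using hJ.tmk_shiftF_mem n h⟩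

lemma tmk_mem_iff (a : TalF Λ) :
    tmk Λ hfin a ∈ J ↔ ∀ q ∈ a.support, tmk Λ hfin (Finsupp.single q 1) ∈ J := by
  constructor
  · intro ha q hq
    have hle : Finsupp.single q 1 ≤ a :=
      Finsupp.single_le_iff.2 (Nat.one_le_iff_ne_zero.2 (Finsupp.mem_support_iff.1 hq))
    rw [← add_tsub_cancel_of_le hle, tmk_add] at ha
    exact hJ.mem_of_add_mem_left ha
  · intro h
    rw [← Finsupp.sum_single a, tmk_eq_mk', map_finsuppSum]
    refine AddSubmonoidClass.finsuppSum_mem hJ.toAddSubmonoid _ _ fun q hq => ?_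
    rw [← Finsupp.smul_single_one, map_nsmul]
    exact hJ.toAddSubmonoid.nsmul_mem (h q (Finsupp.mem_support_iff.2 hq)) _

lemma tmk_mem_iff_forall_vertex_mem (a : TalF Λ) :
    tmk Λ hfin a ∈ J ↔ ∀ q ∈ a.support, tmk Λ hfin (Finsupp.single (q.1, 0) 1) ∈ J := by
  rw [hJ.tmk_mem_iff]
  exact forall₂_congr fun q _ => hJ.tmk_single_mem_iff q.1 q.2

end IsOrderIdeal

end KGraph

open KGraph in
theorem stmt11_general {k : ℕ} (Λ : KGraph k) (hfin : Λ.RowFinite)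
    (J : Set (Tal Λ hfin)) (hJ : IsOrderIdeal Λ hfin J) :
    J = genIdeal Λ hfin {v | tmk Λ hfin (Finsupp.single (v, (0 : Fin k → ℤ)) 1) ∈ J} := by
  ext x
  obtain ⟨a, rfl⟩ := tmk_surjective x
  constructor
  · intro ha
    exact ⟨a, (hJ.tmk_mem_iff_forall_vertex_mem a).1 ha, 0, add_zero _⟩
  · rintro ⟨b, hb, z, hz⟩
    have hbJ : tmk Λ hfin b ∈ J := (hJ.tmk_mem_iff_forall_vertex_mem b).2 hb
    exact hJ.mem_of_add_mem_left (hz ▸ hbJ)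

open KGraph in
/-- For a row-finite `k`-graph `Λ` with no sources, every `ℤᵏ`-order ideal `J` of
the talented monoid `T_Λ` is generated (as a `ℤᵏ`-order ideal) by
`{v(0) : v(0) ∈ J}`. -/
theorem stmt11 {k : ℕ} (Λ : KGraph k) (hfin : Λ.RowFinite) (hns : Λ.NoSources)
    (J : Set (Tal Λ hfin)) (hJ : IsOrderIdeal Λ hfin J) :
    J = genIdeal Λ hfin {v | tmk Λ hfin (Finsupp.single (v, (0 : Fin k → ℤ)) 1) ∈ J} :=
  stmt11_general Λ hfin J hJ
end

section
/- Let Λ be a row-finite k-graph with no sources and let H ⊆ Λ⁰ be hereditary and saturated. Then the quotient k-graph Λ/H (paths λ of Λ with s(λ) ∉ H, vertices Λ⁰∖H) is again a row-finite k-graph without sources, and the talented monoid T_{Λ/H} is isomorphic as a ℤ^k-monoid to the quotient T_Λ/≡_H, where a ≡_H b iff a + x = b + y for some x, y in the ℤ^k-order ideal ⟨H⟩ generated by H. -/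
/-! Sending `v(n)` to `v(n)` for `v ∉ H` and to `0` for `v ∈ H` respects the relations of `T_Λ`:
for `v ∈ H` because `H` is hereditary, for `v ∉ H` because the paths of `Λ/H` from `v` are
exactly the paths of `Λ` from `v` whose source avoids `H`. The same bijection makes
`w(n) ↦ [w(n)]` a well-defined map `T_{Λ/H} → T_Λ/⟨H⟩`, and composing it with the first map
gives the projection `T_Λ → T_Λ/⟨H⟩`. Conversely the first map kills `⟨H⟩`: `Λ/H` has no
sources because `H` is saturated, so `T_{Λ/H}` is conical. -/

namespace AddSubmonoid

variable {M : Type*} [AddCommMonoid M] (I : AddSubmonoid M)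

def quotientCon : AddCon M where
  r a b := ∃ x ∈ I, ∃ y ∈ I, a + x = b + y
  iseqv :=
    { refl _ := ⟨0, I.zero_mem, 0, I.zero_mem, rfl⟩
      symm := fun ⟨x, hx, y, hy, h⟩ => ⟨y, hy, x, hx, h.symm⟩
      trans := fun ⟨x, hx, y, hy, h⟩ ⟨x', hx', y', hy', h'⟩ =>
        ⟨x + x', I.add_mem hx hx', y' + y, I.add_mem hy' hy, by
          rw [← add_assoc, h, add_right_comm, h', add_assoc]⟩ }
  add' := fun ⟨x, hx, y, hy, h⟩ ⟨x', hx', y', hy', h'⟩ =>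
    ⟨x + x', I.add_mem hx hx', y + y', I.add_mem hy hy', by
      rw [add_add_add_comm, h, h', add_add_add_comm]⟩

theorem quotientCon_mk'_eq_zero {x : M} (hx : x ∈ I) : I.quotientCon.mk' x = 0 := by
  rw [← map_zero I.quotientCon.mk']
  exact I.quotientCon.eq.2 ⟨0, I.zero_mem, x, hx, by rw [add_zero, zero_add]⟩

end AddSubmonoid

namespace KGraph

variable {k : ℕ}

section Talented

variable (Λ : KGraph k) (hfin : Λ.RowFinite)

theorem tmk_def (b : TalF Λ) : tmk Λ hfin b = (TalCon Λ hfin).mk' b := rfl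

theorem tmk_eq_sum (b : TalF Λ) :
    tmk Λ hfin b = b.sum fun q c => c • tmk Λ hfin (Finsupp.single q 1) := by
  conv_lhs => rw [← Finsupp.sum_single b]
  simp only [tmk_def, map_finsuppSum, ← map_nsmul, Finsupp.smul_single_one]

theorem tmk_single_eq_sum (v : Λ.V) (n : Fin k → ℤ) (i : Fin k) :
    tmk Λ hfin (Finsupp.single (v, n) 1) = ∑ p ∈ (hfin v (Pi.single i 1)).toFinset,
      tmk Λ hfin (Finsupp.single (Λ.s p, n + Pi.single i 1) 1) := by
  have hrel : tmk Λ hfin (Finsupp.single (v, n) 1) =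
      tmk Λ hfin (∑ p ∈ (hfin v (Pi.single i 1)).toFinset,
        Finsupp.single (Λ.s p, n + Pi.single i 1) 1) :=
    (TalCon Λ hfin).eq.2 (AddConGen.Rel.of _ _ ⟨v, n, i, rfl, rfl⟩)
  rw [hrel, tmk_def, map_sum]
  rfl

namespace Tal

@[elab_as_elim]
theorem induction_on {P : Tal Λ hfin → Prop} (x : Tal Λ hfin) (zero : P 0)
    (single : ∀ q, P (tmk Λ hfin (Finsupp.single q 1)))
    (add : ∀ x y, P x → P y → P (x + y)) : P x := by
  obtain ⟨b, rfl⟩ := (TalCon Λ hfin).mk'_surjective x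
  rw [← tmk_def, tmk_eq_sum, Finsupp.sum]
  refine Finset.sum_induction _ P add zero fun q _ => ?_
  induction b q with
  | zero => rwa [zero_nsmul]
  | succ c ih => rw [succ_nsmul]; exact add _ _ ih (single q)

variable {N : Type*} [AddCommMonoid N]

theorem hom_ext {f g : Tal Λ hfin →+ N}
    (h : ∀ q, f (tmk Λ hfin (Finsupp.single q 1)) = g (tmk Λ hfin (Finsupp.single q 1))) :
    f = g :=
  AddMonoidHom.ext fun x => induction_on Λ hfin x (by rw [map_zero, map_zero]) h
    fun x y hx hy => by rw [map_add, map_add, hx, hy]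

variable (g : Λ.V × (Fin k → ℤ) → N)
  (hg : ∀ v n i, g (v, n) = ∑ p ∈ (hfin v (Pi.single i 1)).toFinset,
    g (Λ.s p, n + Pi.single i 1))

noncomputable def lift : Tal Λ hfin →+ N :=
  (TalCon Λ hfin).lift (Finsupp.linearCombination ℕ g).toAddMonoidHom <| by
    refine AddCon.addConGen_le.2 ?_
    rintro _ _ ⟨v, n, i, rfl, rfl⟩
    simp [AddCon.ker_rel, map_sum, hg v n i]

theorem lift_tmk_single (q : Λ.V × (Fin k → ℤ)) :
    lift Λ hfin g hg (tmk Λ hfin (Finsupp.single q 1)) = g q :=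
  (AddCon.lift_mk' _ _).trans (by simp)

theorem eq_zero_of_add_eq_zero (hns : Λ.NoSources) {u u' : Tal Λ hfin} (h : u + u' = 0) :
    u = 0 := by
  -- sending every generator to `⊤` respects the relations since no `vΛ^{e_i}` is empty
  let c : Tal Λ hfin →+ ℕ∞ := lift Λ hfin (fun _ => ⊤) fun v _ i => by
    rw [Finset.sum_const, nsmul_eq_mul, ENat.mul_top]
    exact_mod_cast (Finset.card_pos.2 ((hfin v _).toFinset_nonempty.2 (hns v _))).ne'
  have hc : ∀ x, c x = 0 → x = 0 := fun x =>
    induction_on Λ hfin x (fun _ => rfl)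
      (fun q hq => by simp [c, lift_tmk_single] at hq)
      fun x y hx hy hxy => by
        rw [map_add, add_eq_zero] at hxy
        rw [hx hxy.1, hy hxy.2, add_zero]
  exact hc u (add_eq_zero.1 (by rw [← map_add, h, map_zero])).1

end Tal

def genIdealAddSubmonoid (X : Set Λ.V) : AddSubmonoid (Tal Λ hfin) where
  carrier := genIdeal Λ hfin X
  zero_mem' := ⟨0, by simp, 0, by rw [add_zero, tmk_def, map_zero]⟩
  add_mem' := by
    classical
    rintro x y ⟨b, hb, z, hz⟩ ⟨b', hb', z', hz'⟩
    refine ⟨b + b', fun q hq => ?_, z + z', ?_⟩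
    · rcases Finset.mem_union.1 (Finsupp.support_add hq) with h | h
      exacts [hb q h, hb' q h]
    · rw [add_add_add_comm, hz, hz']
      exact (map_add (TalCon Λ hfin).mk' b b').symm

variable {Λ hfin}

theorem single_mem_genIdeal {X : Set Λ.V} {v : Λ.V} (n : Fin k → ℤ) (hv : v ∈ X) :
    tmk Λ hfin (Finsupp.single (v, n) 1) ∈ genIdeal Λ hfin X :=
  ⟨_, fun q hq => by rwa [Finset.mem_singleton.1 (Finsupp.support_single_subset hq)], 0,
    add_zero _⟩

theorem map_eq_zero_of_mem_genIdeal {N : Type*} [AddCommMonoid N]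
    (hN : ∀ u u' : N, u + u' = 0 → u = 0) {X : Set Λ.V} (f : Tal Λ hfin →+ N)
    (hf : ∀ v n, v ∈ X → f (tmk Λ hfin (Finsupp.single (v, n) 1)) = 0)
    {x : Tal Λ hfin} (hx : x ∈ genIdeal Λ hfin X) : f x = 0 := by
  obtain ⟨b, hb, z, hz⟩ := hx
  have hfb : f (tmk Λ hfin b) = 0 := by
    rw [tmk_eq_sum, map_finsuppSum]
    exact Finset.sum_eq_zero fun q hq => by
      dsimp only
      rw [map_nsmul, hf q.1 q.2 (hb q hq), nsmul_zero]
  exact hN _ (f z) (by rw [← map_add, hz, hfb])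

end Talented

structure IsQuotientEquiv (Λ : KGraph k) (H : Set Λ.V) (Q : KGraph k)
    (eV : Q.V ≃ {v : Λ.V // v ∉ H}) (eP : Q.P ≃ {p : Λ.P // Λ.s p ∉ H}) : Prop where
  r_eq : ∀ p : Q.P, (eV (Q.r p) : Λ.V) = Λ.r (eP p)
  s_eq : ∀ p : Q.P, (eV (Q.s p) : Λ.V) = Λ.s (eP p)
  d_eq : ∀ p : Q.P, Q.d p = Λ.d (eP p)

section QuotientGen

variable {Λ : KGraph k} {H : Set Λ.V} {Q : KGraph k} (eV : Q.V ≃ {v : Λ.V // v ∉ H})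
  (hfinQ : Q.RowFinite)

open Classical in
noncomputable def quotientGen (q : Λ.V × (Fin k → ℤ)) : Tal Q hfinQ :=
  if h : q.1 ∈ H then 0 else tmk Q hfinQ (Finsupp.single (eV.symm ⟨q.1, h⟩, q.2) 1)

theorem quotientGen_of_mem {v : Λ.V} (n : Fin k → ℤ) (hv : v ∈ H) :
    quotientGen eV hfinQ (v, n) = 0 :=
  dif_pos hv

theorem quotientGen_of_not_mem {v : Λ.V} (n : Fin k → ℤ) (hv : v ∉ H) :
    quotientGen eV hfinQ (v, n) = tmk Q hfinQ (Finsupp.single (eV.symm ⟨v, hv⟩, n) 1) :=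
  dif_neg hv

theorem quotientGen_coe (w : Q.V) (n : Fin k → ℤ) :
    quotientGen eV hfinQ ((eV w : Λ.V), n) = tmk Q hfinQ (Finsupp.single (w, n) 1) := by
  rw [quotientGen_of_not_mem eV hfinQ n (eV w).2, Subtype.coe_eta, Equiv.symm_apply_apply]

end QuotientGen

namespace IsQuotientEquiv

variable {Λ : KGraph k} {H : Set Λ.V} {Q : KGraph k}
  {eV : Q.V ≃ {v : Λ.V // v ∉ H}} {eP : Q.P ≃ {p : Λ.P // Λ.s p ∉ H}}

theorem image_pathsSet (hQ : IsQuotientEquiv Λ H Q eV eP) (w : Q.V) (m : Fin k → ℕ) :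
    (fun q => (eP q : Λ.P)) '' Q.pathsSet w m = {p ∈ Λ.pathsSet (eV w) m | Λ.s p ∉ H} := by
  ext p
  constructor
  · rintro ⟨q, ⟨rfl, rfl⟩, rfl⟩
    exact ⟨⟨(hQ.r_eq q).symm, (hQ.d_eq q).symm⟩, (eP q).2⟩
  · rintro ⟨⟨hr, hd⟩, hs⟩
    refine ⟨eP.symm ⟨p, hs⟩, ⟨eV.injective (Subtype.ext ?_), ?_⟩, by simp⟩
    · rw [hQ.r_eq, Equiv.apply_symm_apply, hr]
    · rw [hQ.d_eq, Equiv.apply_symm_apply, hd]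

theorem rowFinite (hQ : IsQuotientEquiv Λ H Q eV eP) (hfin : Λ.RowFinite) : Q.RowFinite :=
  fun w m => Set.Finite.of_finite_image
    ((hfin _ m).subset (hQ.image_pathsSet w m ▸ Set.sep_subset _ _))
    (Subtype.val_injective.comp eP.injective).injOn

theorem noSources (hQ : IsQuotientEquiv Λ H Q eV eP) (hsat : Saturated Λ H) : Q.NoSources := by
  intro w m
  by_contra hempty
  refine (eV w).2 (hsat _ m fun p hr hd => ?_)
  by_contra hs
  have hp : p ∈ (fun q => (eP q : Λ.P)) '' Q.pathsSet w m :=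
    hQ.image_pathsSet w m ▸ ⟨⟨hr, hd⟩, hs⟩
  exact hempty (Set.image_nonempty.1 ⟨p, hp⟩)

theorem sum_pathsSet (hQ : IsQuotientEquiv Λ H Q eV eP) (hfin : Λ.RowFinite)
    (hfinQ : Q.RowFinite) (w : Q.V) (m : Fin k → ℕ) {N : Type*} [AddCommMonoid N]
    (G : Λ.P → N) (hG : ∀ p, Λ.s p ∈ H → G p = 0) :
    ∑ q ∈ (hfinQ w m).toFinset, G (eP q) = ∑ p ∈ (hfin (eV w) m).toFinset, G p := by
  classical
  rw [← Finset.sum_filter_of_ne (p := fun p => Λ.s p ∉ H) fun p _ hp hs => hp (hG p hs),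
    ← Finset.sum_image fun q _ q' _ h => eP.injective (Subtype.ext h)]
  congr 1
  ext p
  simpa using Set.ext_iff.1 (hQ.image_pathsSet w m) p

theorem map_single_eq_sum (hQ : IsQuotientEquiv Λ H Q eV eP) {hfin : Λ.RowFinite}
    (hfinQ : Q.RowFinite) {N : Type*} [AddCommMonoid N] (f : Tal Λ hfin →+ N)
    (hf : ∀ v n, v ∈ H → f (tmk Λ hfin (Finsupp.single (v, n) 1)) = 0)
    (w : Q.V) (n : Fin k → ℤ) (i : Fin k) :
    f (tmk Λ hfin (Finsupp.single ((eV w : Λ.V), n) 1)) =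
      ∑ q ∈ (hfinQ w (Pi.single i 1)).toFinset,
        f (tmk Λ hfin (Finsupp.single ((eV (Q.s q) : Λ.V), n + Pi.single i 1) 1)) := by
  rw [tmk_single_eq_sum Λ hfin _ n i, map_sum]
  simp only [hQ.s_eq]
  exact (hQ.sum_pathsSet hfin hfinQ w _ _ fun p hp => hf _ _ hp).symm

theorem quotientGen_eq_sum (hQ : IsQuotientEquiv Λ H Q eV eP) (hher : Hereditary Λ H)
    (hfin : Λ.RowFinite) (hfinQ : Q.RowFinite) (v : Λ.V) (n : Fin k → ℤ) (i : Fin k) :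
    quotientGen eV hfinQ (v, n) = ∑ p ∈ (hfin v (Pi.single i 1)).toFinset,
      quotientGen eV hfinQ (Λ.s p, n + Pi.single i 1) := by
  by_cases hv : v ∈ H
  · refine (quotientGen_of_mem eV hfinQ n hv).trans (Finset.sum_eq_zero fun p hp => ?_).symm
    exact quotientGen_of_mem eV hfinQ _ (hher p (((Set.Finite.mem_toFinset _).1 hp).1 ▸ hv))
  · obtain ⟨w, rfl⟩ : ∃ w, (eV w : Λ.V) = v := ⟨eV.symm ⟨v, hv⟩, by simp⟩
    rw [quotientGen_coe, tmk_single_eq_sum Q hfinQ w n i,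
      ← hQ.sum_pathsSet hfin hfinQ w _ _ fun p hp => quotientGen_of_mem eV hfinQ _ hp]
    refine Finset.sum_congr rfl fun q _ => ?_
    rw [← hQ.s_eq, quotientGen_coe]

variable (hQ : IsQuotientEquiv Λ H Q eV eP) (hher : Hereditary Λ H) (hfin : Λ.RowFinite)
  (hfinQ : Q.RowFinite)

noncomputable def quotientMap : Tal Λ hfin →+ Tal Q hfinQ :=
  Tal.lift Λ hfin (quotientGen eV hfinQ) (hQ.quotientGen_eq_sum hher hfin hfinQ)

theorem quotientMap_single (q : Λ.V × (Fin k → ℤ)) :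
    hQ.quotientMap hher hfin hfinQ (tmk Λ hfin (Finsupp.single q 1)) = quotientGen eV hfinQ q :=
  Tal.lift_tmk_single Λ hfin _ _ q

theorem quotientMap_surjective : Function.Surjective (hQ.quotientMap hher hfin hfinQ) :=
  fun y => Tal.induction_on Q hfinQ (P := (· ∈ AddMonoidHom.mrange _)) y (zero_mem _)
    (fun ⟨w, n⟩ => ⟨_, (hQ.quotientMap_single hher hfin hfinQ _).trans
      (quotientGen_coe eV hfinQ w n)⟩)
    fun _ _ => add_mem

noncomputable def quotientMapInv :
    Tal Q hfinQ →+ (genIdealAddSubmonoid Λ hfin H).quotientCon.Quotient :=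
  Tal.lift Q hfinQ
    (fun q => (genIdealAddSubmonoid Λ hfin H).quotientCon.mk'
      (tmk Λ hfin (Finsupp.single ((eV q.1 : Λ.V), q.2) 1)))
    (hQ.map_single_eq_sum hfinQ _ fun _ n hv =>
      AddSubmonoid.quotientCon_mk'_eq_zero _ (single_mem_genIdeal n hv))

theorem quotientMapInv_comp_quotientMap :
    (hQ.quotientMapInv hfin hfinQ).comp (hQ.quotientMap hher hfin hfinQ) =
      (genIdealAddSubmonoid Λ hfin H).quotientCon.mk' := by
  refine Tal.hom_ext Λ hfin fun ⟨v, n⟩ => ?_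
  rw [AddMonoidHom.comp_apply, quotientMap_single]
  by_cases hv : v ∈ H
  · rw [quotientGen_of_mem eV hfinQ n hv, map_zero,
      AddSubmonoid.quotientCon_mk'_eq_zero _ (single_mem_genIdeal n hv)]
  · obtain ⟨w, rfl⟩ : ∃ w, (eV w : Λ.V) = v := ⟨eV.symm ⟨v, hv⟩, by simp⟩
    rw [quotientGen_coe]
    exact Tal.lift_tmk_single Q hfinQ _ _ (w, n)

theorem quotientMap_eq_iff (hsat : Saturated Λ H) (a b : Tal Λ hfin) :
    hQ.quotientMap hher hfin hfinQ a = hQ.quotientMap hher hfin hfinQ b ↔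
      ∃ x ∈ genIdeal Λ hfin H, ∃ y ∈ genIdeal Λ hfin H, a + x = b + y := by
  constructor
  · intro h
    have h' := congrArg (hQ.quotientMapInv hfin hfinQ) h
    rw [← AddMonoidHom.comp_apply, ← AddMonoidHom.comp_apply,
      quotientMapInv_comp_quotientMap] at h'
    exact (AddSubmonoid.quotientCon _).eq.1 h'
  · rintro ⟨x, hx, y, hy, h⟩
    have hker : ∀ z ∈ genIdeal Λ hfin H, hQ.quotientMap hher hfin hfinQ z = 0 :=
      fun z => map_eq_zero_of_mem_genIdeal
        (fun _ _ => Tal.eq_zero_of_add_eq_zero Q hfinQ (hQ.noSources hsat)) _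
        fun v n hv => (hQ.quotientMap_single hher hfin hfinQ _).trans
          (quotientGen_of_mem eV hfinQ n hv)
    simpa [hker x hx, hker y hy] using congrArg (hQ.quotientMap hher hfin hfinQ) h

end IsQuotientEquiv

end KGraph

open KGraph in
theorem stmt15_general {k : ℕ} (Λ : KGraph k) (hfin : Λ.RowFinite)
    (H : Set Λ.V) (hher : Hereditary Λ H) (hsat : Saturated Λ H)
    (Q : KGraph k)
    (eV : Q.V ≃ {v : Λ.V // v ∉ H})
    (eP : Q.P ≃ {p : Λ.P // Λ.s p ∉ H})
    (hr : ∀ p : Q.P, ((eV (Q.r p) : {v : Λ.V // v ∉ H}) : Λ.V) = Λ.r ((eP p : {p : Λ.P // Λ.s p ∉ H}) : Λ.P))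
    (hs : ∀ p : Q.P, ((eV (Q.s p) : {v : Λ.V // v ∉ H}) : Λ.V) = Λ.s ((eP p : {p : Λ.P // Λ.s p ∉ H}) : Λ.P))
    (hd : ∀ p : Q.P, Q.d p = Λ.d ((eP p : {p : Λ.P // Λ.s p ∉ H}) : Λ.P)) :
    Q.RowFinite ∧ Q.NoSources ∧
    ∀ hfinQ : Q.RowFinite,
      ∃ φ : Tal Λ hfin →+ Tal Q hfinQ,
        Function.Surjective φ ∧
        (∀ (v : Λ.V) (n : Fin k → ℤ) (hv : v ∉ H),
          φ (tmk Λ hfin (Finsupp.single (v, n) 1))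
            = tmk Q hfinQ (Finsupp.single (eV.symm ⟨v, hv⟩, n) 1)) ∧
        (∀ (v : Λ.V) (n : Fin k → ℤ), v ∈ H →
          φ (tmk Λ hfin (Finsupp.single (v, n) 1)) = 0) ∧
        (∀ a b : Tal Λ hfin, φ a = φ b ↔
          ∃ x ∈ genIdeal Λ hfin H, ∃ y ∈ genIdeal Λ hfin H, a + x = b + y) := by
  have hQ : IsQuotientEquiv Λ H Q eV eP := ⟨hr, hs, hd⟩
  refine ⟨hQ.rowFinite hfin, hQ.noSources hsat, fun hfinQ =>
    ⟨hQ.quotientMap hher hfin hfinQ, hQ.quotientMap_surjective hher hfin hfinQ,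
      fun v n hv => ?_, fun v n hv => ?_, hQ.quotientMap_eq_iff hher hfin hfinQ hsat⟩⟩
  · exact (hQ.quotientMap_single hher hfin hfinQ _).trans (quotientGen_of_not_mem eV hfinQ n hv)
  · exact (hQ.quotientMap_single hher hfin hfinQ _).trans (quotientGen_of_mem eV hfinQ n hv)

open KGraph in
/-- Let `Λ` be a row-finite `k`-graph with no sources, `H ⊆ Λ⁰` hereditary and
saturated, and let `Q` be the quotient `k`-graph `Λ/H` (identified, via `eV, eP`,
with the vertices outside `H` and the paths with source outside `H`, with the
restricted structure maps). Then `Q` is again row-finite without sources, and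
`T_{Λ/H} ≅ T_Λ/≡_H` as `ℤᵏ`-monoids, where `a ≡_H b` iff `a + x = b + y` for some
`x, y` in the `ℤᵏ`-order ideal `⟨H⟩`. -/
theorem stmt15 {k : ℕ} (Λ : KGraph k) (hfin : Λ.RowFinite) (hns : Λ.NoSources)
    (H : Set Λ.V) (hher : Hereditary Λ H) (hsat : Saturated Λ H)
    (Q : KGraph k)
    (eV : Q.V ≃ {v : Λ.V // v ∉ H})
    (eP : Q.P ≃ {p : Λ.P // Λ.s p ∉ H})
    (hr : ∀ p : Q.P, ((eV (Q.r p) : {v : Λ.V // v ∉ H}) : Λ.V) = Λ.r ((eP p : {p : Λ.P // Λ.s p ∉ H}) : Λ.P))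
    (hs : ∀ p : Q.P, ((eV (Q.s p) : {v : Λ.V // v ∉ H}) : Λ.V) = Λ.s ((eP p : {p : Λ.P // Λ.s p ∉ H}) : Λ.P))
    (hd : ∀ p : Q.P, Q.d p = Λ.d ((eP p : {p : Λ.P // Λ.s p ∉ H}) : Λ.P))
    (hident : ∀ v : Q.V, ((eP (Q.ident v) : {p : Λ.P // Λ.s p ∉ H}) : Λ.P)
        = Λ.ident ((eV v : {v : Λ.V // v ∉ H}) : Λ.V))
    (hcomp : ∀ (p q : Q.P) (h : Q.s p = Q.r q)
        (h' : Λ.s ((eP p : {p : Λ.P // Λ.s p ∉ H}) : Λ.P)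
            = Λ.r ((eP q : {p : Λ.P // Λ.s p ∉ H}) : Λ.P)),
        ((eP (Q.comp p q h) : {p : Λ.P // Λ.s p ∉ H}) : Λ.P)
          = Λ.comp ((eP p : {p : Λ.P // Λ.s p ∉ H}) : Λ.P)
              ((eP q : {p : Λ.P // Λ.s p ∉ H}) : Λ.P) h') :
    Q.RowFinite ∧ Q.NoSources ∧
    ∀ hfinQ : Q.RowFinite,
      ∃ φ : Tal Λ hfin →+ Tal Q hfinQ,
        Function.Surjective φ ∧
        (∀ (v : Λ.V) (n : Fin k → ℤ) (hv : v ∉ H),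
          φ (tmk Λ hfin (Finsupp.single (v, n) 1))
            = tmk Q hfinQ (Finsupp.single (eV.symm ⟨v, hv⟩, n) 1)) ∧
        (∀ (v : Λ.V) (n : Fin k → ℤ), v ∈ H →
          φ (tmk Λ hfin (Finsupp.single (v, n) 1)) = 0) ∧
        (∀ a b : Tal Λ hfin, φ a = φ b ↔
          ∃ x ∈ genIdeal Λ hfin H, ∃ y ∈ genIdeal Λ hfin H, a + x = b + y) :=
  stmt15_general Λ hfin H hher hsat Q eV eP hr hs hd
end
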